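/- arXiv:1403.3170 — 2 statements merged into one kernel-verified Lean document; each statement's English description precedes it below -/
import Mathlib

section
/- Let A be a nonzero m×n complex matrix and B an s×t complex matrix. Then Σ_{d=1}^{n} [A e_{d,n} ⊗ I_s]* (A⊗B) [e_{d,n} ⊗ I_t] = ‖A‖_F² · B, where e_{d,n} is the d-th standard basis column vector of ℂ^n, I_s is the s×s identity matrix, X* denotes the conjugate transpose of X, and ‖A‖_F = √(tr(A*A)) is the Frobenius norm. Equivalently, the left Frobenius Kronecker quotient A ⊘_F (A⊗B) = B, and ⊘_F is the uniform left Kronecker quotient realized by Q(A) = conj(A)/‖A‖_F², i.e. (conj(A)/‖A‖_F²) ∘ (A⊗B) = B. -/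
/-!
By the mixed-product rule each summand is `(e_dᴴ (Aᴴ A) e_d) ⊗ B`, a `1 × 1` matrix tensored
with `B`, and these scalars add up to `tr (Aᴴ A)`. Likewise `C ∘ (A ⊗ B) = tr (Cᵀ A) • B` for
every `C`, and `tr (Cᵀ A) = 1` for `C = conj A / tr (Aᴴ A)`; the trace is nonzero since `A ≠ 0`.
-/

open Matrix
open scoped Kronecker ComplexConjugate

/-- The partial Frobenius product `A ∘ M`:
`(A ∘ M)_{u,v} = ∑_{j,k} A_{j,k} M_{(j,u),(k,v)}`. -/
noncomputable def pfrob {I J S T : Type*} [Fintype I] [Fintype J]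
    (A : Matrix I J ℂ) (M : Matrix (I × S) (J × T) ℂ) : Matrix S T ℂ :=
  Matrix.of fun u v => ∑ j, ∑ k, A j k * M (j, u) (k, v)

namespace Matrix

variable {α ι κ I J S T : Type*}

theorem sum_kronecker [NonUnitalNonAssocSemiring α] (s : Finset ι) (A : ι → Matrix I J α)
    (B : Matrix S T α) : (∑ i ∈ s, A i) ⊗ₖ B = ∑ i ∈ s, A i ⊗ₖ B :=
  map_sum (G := Matrix I J α →+ Matrix (I × S) (J × T) α)
    { toFun := fun M => M ⊗ₖ B
      map_zero' := zero_kronecker B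
      map_add' := fun A₁ A₂ => add_kronecker A₁ A₂ B } A s

theorem kronecker_one_mul_kronecker_mul_kronecker_one [CommSemiring α] [Fintype I] [Fintype J]
    [Fintype S] [Fintype T] [DecidableEq S] [DecidableEq T]
    (X : Matrix ι I α) (A : Matrix I J α) (Y : Matrix J κ α) (B : Matrix S T α) :
    (X ⊗ₖ (1 : Matrix S S α)) * (A ⊗ₖ B) * (Y ⊗ₖ (1 : Matrix T T α)) = (X * A * Y) ⊗ₖ B := by
  rw [← mul_kronecker_mul, ← mul_kronecker_mul, Matrix.one_mul, Matrix.mul_one]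

theorem conjTranspose_replicateCol_mul_mul_replicateCol [NonUnitalSemiring α] [StarRing α]
    [Fintype I] [Fintype J] (v : I → α) (M : Matrix I J α) (w : J → α) :
    (replicateCol ι v)ᴴ * M * replicateCol ι w = of fun _ _ => star v ⬝ᵥ (M *ᵥ w) := by
  rw [conjTranspose_replicateCol, Matrix.mul_assoc, ← replicateCol_mulVec,
    replicateRow_mul_replicateCol]

theorem sum_conjTranspose_replicateCol_mulVec_single_mul_mul_replicateCol_single [Semiring α]
    [StarRing α] [Fintype I] [Fintype J] [DecidableEq J] (A : Matrix I J α) :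
    ∑ d, (replicateCol ι (A *ᵥ Pi.single d 1))ᴴ * A * replicateCol ι (Pi.single d (1 : α)) =
      of fun _ _ => trace (Aᴴ * A) := by
  simp_rw [conjTranspose_replicateCol_mul_mul_replicateCol, mulVec_single_one]
  ext
  simp [trace, mul_apply, dotProduct, sum_apply]

theorem reindex_uniqueProd_kronecker [Mul α] [Unique ι] [Unique κ] (M : Matrix ι κ α)
    (B : Matrix S T α) :
    reindex (Equiv.uniqueProd S ι) (Equiv.uniqueProd T κ) (M ⊗ₖ B) = M default default • B := by
  ext
  rfl

end Matrix

theorem pfrob_kronecker {I J S T : Type*} [Fintype I] [Fintype J] (C A : Matrix I J ℂ)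
    (B : Matrix S T ℂ) :
    pfrob C (A ⊗ₖ B) = trace (Cᵀ * A) • B := by
  ext u v
  simp [pfrob, trace, mul_apply, Finset.sum_mul, Finset.sum_comm (γ := I), mul_assoc]

theorem frobenius_partial_norm_of_kronecker
    {m n s t : ℕ}
    (A : Matrix (Fin m) (Fin n) ℂ) (hA : A ≠ 0)
    (B : Matrix (Fin s) (Fin t) ℂ) :
    (Matrix.reindex (Equiv.uniqueProd (Fin s) (Fin 1))
        (Equiv.uniqueProd (Fin t) (Fin 1))
      (∑ d : Fin n,
        ((Matrix.replicateCol (Fin 1) (A.mulVec (Pi.single d 1)))ᴴ ⊗ₖ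
            (1 : Matrix (Fin s) (Fin s) ℂ)) *
          (A ⊗ₖ B) *
          ((Matrix.replicateCol (Fin 1) (Pi.single d (1 : ℂ))) ⊗ₖ
            (1 : Matrix (Fin t) (Fin t) ℂ))) = Matrix.trace (Aᴴ * A) • B) ∧
    pfrob ((Matrix.trace (Aᴴ * A))⁻¹ • A.map (starRingEnd ℂ)) (A ⊗ₖ B) = B := by
  constructor
  · simp_rw [kronecker_one_mul_kronecker_mul_kronecker_one, ← sum_kronecker,
      sum_conjTranspose_replicateCol_mulVec_single_mul_mul_replicateCol_single,
      reindex_uniqueProd_kronecker, of_apply]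
  · have htrace : trace (Aᴴ * A) ≠ 0 := by
      open scoped ComplexOrder in exact mt trace_conjTranspose_mul_self_eq_zero_iff.mp hA
    rw [pfrob_kronecker, transpose_smul, Matrix.smul_mul, trace_smul, smul_eq_mul,
      show (A.map (starRingEnd ℂ))ᵀ = Aᴴ from rfl, inv_mul_cancel₀ htrace, one_smul]
end

section
/- Let A be a nonzero m×n complex matrix, let M be an ms×nt complex matrix, and set X₀ := (conj(A)/‖A‖_F²) ∘ M ∈ M(ℂ,s,t), where ∘ denotes the partial Frobenius product. Then X₀ minimizes the Frobenius-norm distance to M among Kronecker multiples of A: for every X ∈ M(ℂ,s,t), ‖M − A⊗X₀‖_F ≤ ‖M − A⊗X‖_F. -/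
/-!
Write `B_{uv}` for the `m × n` matrix `(j, k) ↦ M_{(j,u),(k,v)}`. The entries of `M - A ⊗ X`
are those of the matrices `B_{uv} - X_{uv} A`, so the squared distance splits into
independent scalar least-squares problems `min_x ‖B_{uv} - x A‖²`. Each is solved by the
coefficient `⟨A, B_{uv}⟩ / ‖A‖² = (X₀)_{uv}` of the orthogonal projection of `B_{uv}` onto
`ℂ A`: the residual is orthogonal to `A`, so by Pythagoras
`‖B_{uv} - x A‖² = ‖B_{uv} - (X₀)_{uv} A‖² + |(X₀)_{uv} - x|² ‖A‖²`.
-/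

open Matrix
open scoped Kronecker ComplexConjugate

/-- The Frobenius norm of a complex matrix. -/
noncomputable def frobNorm {I J : Type*} [Fintype I] [Fintype J]
    (M : Matrix I J ℂ) : ℝ :=
  Real.sqrt (∑ i, ∑ j, ‖M i j‖ ^ 2)

open Complex Finset

section LeastSquares

variable {ι : Type*} [Fintype ι] (a w : ι → ℂ)

noncomputable def leastSquaresCoeff : ℂ :=
  (∑ i, (normSq (a i) : ℂ))⁻¹ * ∑ i, conj (a i) * w i

theorem sum_normSq_sub_mul_eq_add_of_orthogonal {y : ℂ}
    (hy : ∑ i, conj (a i) * (w i - a i * y) = 0) (x : ℂ) :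
    ∑ i, normSq (w i - a i * x) =
      ∑ i, normSq (w i - a i * y) + normSq (y - x) * ∑ i, normSq (a i) := by
  have hcross : ∑ i, ((w i - a i * y) * conj (a i * (y - x))).re = 0 := by
    simp_rw [← re_sum, map_mul, ← mul_assoc, ← sum_mul, mul_comm (w _ - _), hy, zero_mul,
      zero_re]
  have hsplit : ∀ i, w i - a i * x = (w i - a i * y) + a i * (y - x) := fun i => by ring
  simp_rw [hsplit, normSq_add, sum_add_distrib, ← mul_sum, hcross, normSq_mul, ← sum_mul]
  ring

theorem sum_conj_mul_sub_leastSquaresCoeff_eq_zero :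
    ∑ i, conj (a i) * (w i - a i * leastSquaresCoeff a w) = 0 := by
  have hnormSq : ∀ i, conj (a i) * a i = normSq (a i) := fun i => (normSq_eq_conj_mul_self).symm
  simp only [leastSquaresCoeff, mul_sub, sum_sub_distrib, ← mul_assoc, hnormSq, ← sum_mul]
  by_cases hc : ∑ i, (normSq (a i) : ℂ) = 0
  · have ha : ∀ i, a i = 0 := by
      rw [← ofReal_sum, ofReal_eq_zero,
        sum_eq_zero_iff_of_nonneg fun i _ => normSq_nonneg _] at hc
      simpa using hc
    simp [ha]
  · rw [mul_inv_cancel₀ hc, one_mul, sub_self]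

theorem sum_normSq_sub_leastSquaresCoeff_le (x : ℂ) :
    ∑ i, normSq (w i - a i * leastSquaresCoeff a w) ≤ ∑ i, normSq (w i - a i * x) := by
  rw [sum_normSq_sub_mul_eq_add_of_orthogonal a w
    (sum_conj_mul_sub_leastSquaresCoeff_eq_zero a w) x]
  exact le_add_of_nonneg_right
    (mul_nonneg (normSq_nonneg _) (sum_nonneg fun i _ => normSq_nonneg _))

end LeastSquares

section Kronecker

variable {I J S T : Type*} [Fintype I] [Fintype J]

theorem trace_conjTranspose_mul_self_eq_sum_normSq (A : Matrix I J ℂ) :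
    trace (Aᴴ * A) = ∑ jk : I × J, (normSq (A jk.1 jk.2) : ℂ) := by
  simp [trace, mul_apply, Fintype.sum_prod_type, normSq_eq_conj_mul_self]
  exact sum_comm

theorem pfrob_smul_map_conj_apply (c : ℂ) (A : Matrix I J ℂ) (M : Matrix (I × S) (J × T) ℂ)
    (u : S) (v : T) :
    pfrob (c • A.map conj) M u v =
      c * ∑ jk : I × J, conj (A jk.1 jk.2) * M (jk.1, u) (jk.2, v) := by
  simp [pfrob, Fintype.sum_prod_type, mul_sum, mul_assoc]

variable [Fintype S] [Fintype T]

theorem sum_normSq_sub_kronecker (A : Matrix I J ℂ) (M : Matrix (I × S) (J × T) ℂ)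
    (Y : Matrix S T ℂ) :
    ∑ p, ∑ q, normSq ((M - A ⊗ₖ Y) p q) =
      ∑ u, ∑ v, ∑ jk : I × J, normSq (M (jk.1, u) (jk.2, v) - A jk.1 jk.2 * Y u v) := by
  calc ∑ p, ∑ q, normSq ((M - A ⊗ₖ Y) p q)
      = ∑ x : (I × S) × (J × T), normSq ((M - A ⊗ₖ Y) x.1 x.2) :=
        (Fintype.sum_prod_type' _).symm
    _ = ∑ x : (I × J) × (S × T),
          normSq (M (x.1.1, x.2.1) (x.1.2, x.2.2) - A x.1.1 x.1.2 * Y x.2.1 x.2.2) :=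
        Fintype.sum_equiv (Equiv.prodProdProdComm I S J T) _ _ fun _ => rfl
    _ = _ := by rw [Fintype.sum_prod_type, sum_comm]; exact Fintype.sum_prod_type _

end Kronecker

theorem frobenius_kronecker_quotient_minimizes_general
    {m n s t : ℕ}
    (A : Matrix (Fin m) (Fin n) ℂ)
    (M : Matrix (Fin m × Fin s) (Fin n × Fin t) ℂ) :
    ∀ X : Matrix (Fin s) (Fin t) ℂ,
      frobNorm (M - A ⊗ₖ pfrob ((Matrix.trace (Aᴴ * A))⁻¹ • A.map (starRingEnd ℂ)) M) ≤
        frobNorm (M - A ⊗ₖ X) := by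
  intro X
  unfold frobNorm
  gcongr 1
  simp only [Complex.sq_norm, sum_normSq_sub_kronecker, pfrob_smul_map_conj_apply,
    trace_conjTranspose_mul_self_eq_sum_normSq]
  exact sum_le_sum fun u _ => sum_le_sum fun v _ =>
    sum_normSq_sub_leastSquaresCoeff_le (fun jk : Fin m × Fin n => A jk.1 jk.2)
      (fun jk => M (jk.1, u) (jk.2, v)) (X u v)

theorem frobenius_kronecker_quotient_minimizes
    {m n s t : ℕ}
    (A : Matrix (Fin m) (Fin n) ℂ) (hA : A ≠ 0)
    (M : Matrix (Fin m × Fin s) (Fin n × Fin t) ℂ) :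
    ∀ X : Matrix (Fin s) (Fin t) ℂ,
      frobNorm (M - A ⊗ₖ pfrob ((Matrix.trace (Aᴴ * A))⁻¹ • A.map (starRingEnd ℂ)) M) ≤
        frobNorm (M - A ⊗ₖ X) :=
  frobenius_kronecker_quotient_minimizes_general A M
end
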